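/- For G = GL_{2d·r} with standard Levi L ≅ G_r^{2d}, identify a*_{L,C} ≅ C^{2d} and let Λ_L^M = ((d−1)/2, (d−3)/2, …, −(d−1)/2, (d−1)/2, …, −(d−1)/2). For σ ∈ 𝔖_d define w_σ ∈ 𝔖_{2d} by w_σ(i) = 2σ(i)−1 and w_σ(2d+1−i) = 2σ(i) for 1 ≤ i ≤ d, and let R ⊆ G be the standard parabolic of Levi type (2r,…,2r) (d blocks). Then the map σ ↦ w_σ⁻¹·R is a bijection from 𝔖_d onto the set of Q ∈ F₂(M) such that (Λ_L^M + μ)_Q^G = 0 for all μ ∈ a_P^{G,*}, where M ≅ G_{dr}×G_{dr} and P is its standard parabolic. -/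
import Mathlib


open Finset

/-- Downward-closed image: an ordered partition of the (L-)blocks. -/
def IsOPn (n : ℕ) (c : Fin n → ℕ) : Prop :=
  ∀ j : ℕ, (∃ a, c a = j) → ∀ j' : ℕ, j' ≤ j → ∃ a, c a = j'

/-- `Λ_L^M = ((d-1)/2, (d-3)/2, …, -(d-1)/2, (d-1)/2, …, -(d-1)/2)` in the `2d` block
coordinates of `a_L^* ≅ ℝ^{2d}` (each block of size `r`). -/
noncomputable def LamLM (d : ℕ) (a : Fin (2 * d)) : ℝ :=
  if (a : ℕ) < d then ((d : ℝ) - 1) / 2 - (a : ℕ)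
  else ((d : ℝ) - 1) / 2 - ((((a : ℕ) - d : ℕ)) : ℝ)

/-- The ordered partition `w_σ⁻¹·R` of the `2d` blocks determined by `σ ∈ 𝔖_d`: the pair
`{i, 2d-1-i}` is the part placed in position `σ(i)`. -/
def cmap (d : ℕ) (σ : Equiv.Perm (Fin d)) : Fin (2 * d) → ℕ := fun a =>
  if h : (a : ℕ) < d then (σ ⟨(a : ℕ), h⟩).val
  else (σ ⟨2 * d - 1 - (a : ℕ), by have := a.isLt; omega⟩).val

private lemma cast_pair_eq (d u v : ℕ) (hv : d ≤ v)
    (h : ((d : ℝ) - 1) - (u : ℕ) - (((v - d : ℕ)) : ℝ) = 0) : v + u + 1 = 2 * d := by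
  rw [Nat.cast_sub hv] at h
  have h2 : ((v + u + 1 : ℕ) : ℝ) = ((2 * d : ℕ) : ℝ) := by push_cast; linarith
  exact_mod_cast h2

private lemma val_lt (d : ℕ) (σ : Equiv.Perm (Fin d)) (a : Fin (2 * d)) : cmap d σ a < d := by
  unfold cmap
  split <;> exact (σ _).isLt

private lemma cmap_eq_iff (d : ℕ) (σ : Equiv.Perm (Fin d)) (a b : Fin (2 * d)) :
    cmap d σ a = cmap d σ b ↔ ((a : ℕ) = (b : ℕ) ∨ (a : ℕ) + (b : ℕ) = 2 * d - 1) := by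
  have ha := a.isLt
  have hb := b.isLt
  unfold cmap
  split <;> split <;>
    (rw [Fin.val_eq_val, Equiv.apply_eq_iff_eq, Fin.mk.injEq]; omega)

/-- The map `σ ↦ w_σ⁻¹·R` is a bijection from `𝔖_d` onto the set of parabolic subgroups
`Q ∈ 𝓕₂` containing `L ≅ G_r^{2d}` (ordered partitions of the `2d` blocks whose parts are the
orbits of an involution) such that `(Λ_L^M + μ)_Q^G = 0` for all `μ ∈ a_P^{G,*}` (part-wise
sums of `Λ_L^M + μ` vanish, `μ` running over the characters `(x,…,x,-x,…,-x)` of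
`M ≅ G_{dr} × G_{dr}`). -/
theorem stmt_17 (d r : ℕ) (hr : 0 < r) :
    Set.BijOn (fun σ : Equiv.Perm (Fin d) => cmap d σ) Set.univ
      {c : Fin (2 * d) → ℕ |
        IsOPn (2 * d) c ∧
        (∃ σ' : Equiv.Perm (Fin (2 * d)), σ' * σ' = 1 ∧
          ∀ a b : Fin (2 * d), c a = c b ↔ (σ' a = b ∨ a = b)) ∧
        (∀ (x : ℝ) (j : ℕ), (∃ a, c a = j) →
          ∑ a ∈ univ.filter (fun a : Fin (2 * d) => c a = j),
            (LamLM d a + (if (a : ℕ) < d then x else -x)) = 0)} := by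
  have hdle : d ≤ 2 * d := by omega
  refine ⟨?_, ?_, ?_⟩
  · -- MapsTo
    intro σ _
    refine ⟨?_, ?_, ?_⟩
    · -- IsOPn
      rintro j ⟨a, ha⟩ j' hj'
      have hjd : j < d := ha ▸ val_lt d σ a
      have hj'd : j' < d := lt_of_le_of_lt hj' hjd
      refine ⟨Fin.castLE hdle (σ.symm ⟨j', hj'd⟩), ?_⟩
      have hlt : ((Fin.castLE hdle (σ.symm ⟨j', hj'd⟩) : Fin (2 * d)) : ℕ) < d :=
        (σ.symm ⟨j', hj'd⟩).isLt
      simp only [cmap, dif_pos hlt]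
      simp [Fin.eta]
    · -- involution
      have hbnd : ∀ a : Fin (2 * d), 2 * d - 1 - (a : ℕ) < 2 * d := by
        intro a; have := a.isLt; omega
      have hinvol : Function.Involutive
          (fun a : Fin (2 * d) => (⟨2 * d - 1 - (a : ℕ), hbnd a⟩ : Fin (2 * d))) := by
        intro a
        have := a.isLt
        apply Fin.ext
        simp
        omega
      refine ⟨hinvol.toPerm _, ?_, ?_⟩
      · apply Equiv.ext
        intro a
        rw [Equiv.Perm.mul_apply, Equiv.Perm.one_apply]
        exact hinvol a
      · intro a b
        have ha := a.isLt
        have hb := b.isLt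
        have hτ : ((hinvol.toPerm _ a : Fin (2 * d)) : ℕ) = 2 * d - 1 - (a : ℕ) := rfl
        rw [cmap_eq_iff, Fin.ext_iff, Fin.ext_iff, hτ]
        omega
    · -- sum condition
      rintro x j ⟨a, ha⟩
      have hjd : j < d := ha ▸ val_lt d σ a
      set i : Fin d := σ.symm ⟨j, hjd⟩ with hi
      have hiv : i.val < d := i.isLt
      have hd0 : 0 < d := by omega
      have h1b : 2 * d - 1 - (i : ℕ) < 2 * d := by omega
      set i0 : Fin (2 * d) := Fin.castLE hdle i with hi0
      set i1 : Fin (2 * d) := ⟨2 * d - 1 - (i : ℕ), h1b⟩ with hi1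
      have hci0 : cmap d σ i0 = j := by
        simp only [cmap, hi0, dif_pos (show ((Fin.castLE hdle i : Fin (2 * d)) : ℕ) < d from hiv)]
        simp [hi]
      have hfilter : univ.filter (fun b : Fin (2 * d) => cmap d σ b = j) = {i0, i1} := by
        ext b
        simp only [mem_filter, mem_univ, true_and, mem_insert, mem_singleton]
        rw [show (cmap d σ b = j) ↔ (cmap d σ b = cmap d σ i0) by rw [hci0], cmap_eq_iff,
          Fin.ext_iff, Fin.ext_iff]
        have hb := b.isLt
        have : (i0 : ℕ) = (i : ℕ) := rfl
        have : (i1 : ℕ) = 2 * d - 1 - (i : ℕ) := rfl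
        omega
      have hne : i0 ≠ i1 := by
        intro h
        have := congrArg Fin.val h
        simp only [hi0, hi1, Fin.coe_castLE] at this
        omega
      rw [hfilter, Finset.sum_pair hne]
      have hv0 : (i0 : ℕ) = (i : ℕ) := rfl
      have hv1 : (i1 : ℕ) = 2 * d - 1 - (i : ℕ) := rfl
      have h0d : (i0 : ℕ) < d := by omega
      have h1d : ¬ (i1 : ℕ) < d := by omega
      simp only [LamLM, if_pos h0d, if_neg h1d]
      have e0 : (i0 : ℕ) = (i : ℕ) := rfl
      have e1 : ((i1 : ℕ) - d : ℕ) = d - 1 - (i : ℕ) := by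
        show (2 * d - 1 - (i : ℕ)) - d = d - 1 - (i : ℕ)
        omega
      rw [e0, e1, Nat.cast_sub (by omega : (i : ℕ) ≤ d - 1),
        Nat.cast_sub (by omega : 1 ≤ d), Nat.cast_one]
      ring
  · -- InjOn
    intro σ _ τ _ h
    ext i
    have h2 := congrFun h (Fin.castLE hdle i)
    have hlt : ((Fin.castLE hdle i : Fin (2 * d)) : ℕ) < d := i.isLt
    simp only [cmap, dif_pos hlt] at h2
    exact h2
  · -- SurjOn
    rintro c ⟨hop, ⟨σ', hσ'2, hcc⟩, hsum⟩
    have hinvol : ∀ x, σ' (σ' x) = x := by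
      intro x
      have := DFunLike.congr_fun hσ'2 x
      simpa using this
    have hfib : ∀ a : Fin (2 * d), univ.filter (fun b => c b = c a) = {a, σ' a} := by
      intro a
      ext b
      simp only [mem_filter, mem_univ, true_and, mem_insert, mem_singleton]
      rw [hcc b a]
      constructor
      · rintro (h | h)
        · right; rw [← h, hinvol]
        · left; exact h
      · rintro (h | h)
        · right; exact h
        · left; rw [h, hinvol]
    have hne : ∀ a : Fin (2 * d), a ≠ σ' a := by
      intro a heq
      have h0 := hsum 0 (c a) ⟨a, rfl⟩
      have h1 := hsum 1 (c a) ⟨a, rfl⟩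
      rw [hfib a, ← heq, Finset.insert_eq_self.mpr (Finset.mem_singleton_self a), Finset.sum_singleton] at h0 h1
      split_ifs at h0 h1 <;> norm_num at h0 h1 <;> linarith
    have hval : ∀ a : Fin (2 * d), ((σ' a : Fin (2 * d)) : ℕ) = 2 * d - 1 - (a : ℕ) := by
      intro a
      have h0 := hsum 0 (c a) ⟨a, rfl⟩
      have h1 := hsum 1 (c a) ⟨a, rfl⟩
      rw [hfib a, Finset.sum_pair (hne a)] at h0 h1
      have ha := a.isLt
      have hb := (σ' a).isLt
      by_cases had : (a : ℕ) < d
      · by_cases hbd : ((σ' a : Fin (2 * d)) : ℕ) < d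
        · exfalso
          simp only [if_pos had, if_pos hbd] at h0 h1
          linarith
        · simp only [LamLM, if_pos had, if_neg hbd, add_zero, neg_zero] at h0
          have := cast_pair_eq d (a : ℕ) ((σ' a : Fin (2 * d)) : ℕ) (le_of_not_gt hbd)
            (by linarith)
          omega
      · by_cases hbd : ((σ' a : Fin (2 * d)) : ℕ) < d
        · simp only [LamLM, if_pos hbd, if_neg had, add_zero, neg_zero] at h0
          have := cast_pair_eq d ((σ' a : Fin (2 * d)) : ℕ) (a : ℕ) (le_of_not_gt had)
            (by linarith)
          omega
        · exfalso
          simp only [if_neg had, if_neg hbd] at h0 h1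
          linarith
    have hcpair : ∀ a b : Fin (2 * d),
        c a = c b ↔ ((a : ℕ) = (b : ℕ) ∨ (a : ℕ) + (b : ℕ) = 2 * d - 1) := by
      intro a b
      rw [hcc a b, Fin.ext_iff, Fin.ext_iff, hval a]
      have := a.isLt
      have := b.isLt
      omega
    have hinj1 : Function.Injective (fun i : Fin d => c (Fin.castLE hdle i)) := by
      intro i i' h
      have := (hcpair (Fin.castLE hdle i) (Fin.castLE hdle i')).mp h
      simp only [Fin.coe_castLE] at this
      have := i.isLt
      have := i'.isLt
      apply Fin.ext
      omega
    have hmem : ∀ a : Fin (2 * d),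
        c a ∈ Finset.image (fun i : Fin d => c (Fin.castLE hdle i)) univ := by
      intro a
      have ha := a.isLt
      by_cases had : (a : ℕ) < d
      · refine Finset.mem_image.mpr ⟨⟨(a : ℕ), had⟩, Finset.mem_univ _, ?_⟩
        congr 1
      · have hd0 : 0 < d := by omega
        refine Finset.mem_image.mpr ⟨⟨2 * d - 1 - (a : ℕ), by omega⟩, Finset.mem_univ _, ?_⟩
        exact (hcpair _ a).mpr (Or.inr (by simp only [Fin.coe_castLE]; omega))
    have hlt : ∀ a : Fin (2 * d), c a < d := by
      intro a
      by_contra hge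
      push_neg at hge
      have hsub : Finset.range (c a + 1) ⊆
          Finset.image (fun i : Fin d => c (Fin.castLE hdle i)) univ := by
        intro j hj
        rw [Finset.mem_range] at hj
        obtain ⟨a', ha'⟩ := hop (c a) ⟨a, rfl⟩ j (by omega)
        exact ha' ▸ hmem a'
      have hcard := Finset.card_le_card hsub
      rw [Finset.card_range, Finset.card_image_of_injective _ hinj1, card_univ,
        Fintype.card_fin] at hcard
      omega
    set σ₀ : Fin d → Fin d := fun i => ⟨c (Fin.castLE hdle i), hlt _⟩ with hσ₀
    have hinj0 : Function.Injective σ₀ := by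
      intro i i' h
      exact hinj1 (congrArg Fin.val h)
    refine ⟨Equiv.ofBijective σ₀ (Finite.injective_iff_bijective.mp hinj0), Set.mem_univ _, ?_⟩
    funext a
    show cmap d (Equiv.ofBijective σ₀ _) a = c a
    have ha := a.isLt
    unfold cmap
    split
    · next h =>
      show (σ₀ ⟨(a : ℕ), h⟩).val = c a
      show c (Fin.castLE hdle ⟨(a : ℕ), h⟩) = c a
      congr 1
    · next h =>
      show (σ₀ ⟨2 * d - 1 - (a : ℕ), _⟩).val = c a
      show c (Fin.castLE hdle ⟨2 * d - 1 - (a : ℕ), _⟩) = c a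
      exact (hcpair _ a).mpr (Or.inr (by simp only [Fin.coe_castLE]; omega))
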